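/- For any two rooted binary trees S and T with the same number n of vertices, the chain distance satisfies C(S,T) ≥ |R_S − R_T|, where R_Y denotes the number of maximal right chains of a tree Y. -/
import Mathlib


/-- Rooted binary trees with vertices labeled by `α`: each vertex has an optional
left child and an optional right child; `nil` denotes the absent (empty) tree. -/
inductive BT (α : Type) : Type
  | nil : BT α
  | node : BT α → α → BT α → BT α

namespace BT

variable {α : Type}

/-- The number of vertices of a tree. -/
def size : BT α → ℕ
  | nil => 0
  | node l _ r => size l + size r + 1

/-- The in-order (infix) traversal sequence of the labels of a tree:
left subtree first, then the root, then the right subtree. -/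
def inorder : BT α → List α
  | nil => []
  | node l x r => inorder l ++ x :: inorder r

/-- The number of vertices of the tree having a (non-null) right child. -/
def rightChildCount : BT α → ℕ
  | nil => 0
  | node l _ nil => rightChildCount l
  | node l _ (node rl y rr) => rightChildCount l + rightChildCount (node rl y rr) + 1

/-- The number of vertices of the tree having a (non-null) left child. -/
def leftChildCount : BT α → ℕ
  | nil => 0
  | node nil _ r => leftChildCount r
  | node (node ll y lr) _ r => leftChildCount (node ll y lr) + leftChildCount r + 1

/-- `L T`: the number of maximal left chains of `T`.  A left chain is a sequence of
vertices each linked to the next by a left-child pointer (a single vertex is a chain);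
a maximal left chain is one not contained in any other left chain.  Each maximal left
chain is uniquely determined by its topmost vertex, which is either the root of the
tree or a right child of some vertex; moreover the maximal left chain headed by the
root of a nonempty left subtree `l` merges with its parent, which yields the
recursion below. -/
def L : BT α → ℕ
  | nil => 0
  | node nil _ r => 1 + L r
  | node (node ll y lr) _ r => L (node ll y lr) + L r

/-- `R T`: the number of maximal right chains of `T` (mirror image of `L`). -/
def R : BT α → ℕ
  | nil => 0
  | node l _ nil => R l + 1
  | node l _ (node rl y rr) => R l + R (node rl y rr)

/-- The complete left chain on `n` vertices: the tree in which all `n` vertices are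
linked by left-child pointers. -/
def leftChain : ℕ → BT Unit
  | 0 => nil
  | n + 1 => node (leftChain n) () nil

/-- The complete right chain on `n` vertices: the tree in which all `n` vertices are
linked by right-child pointers. -/
def rightChain : ℕ → BT Unit
  | 0 => nil
  | n + 1 => node nil () (rightChain n)

/-- `SpliceL A w U V lv` captures the local effect of the direct chain rotation
`rot([u-v], w)` for a **left** chain `[u-v]`: here `U` is the subtree rooted at `u`
(`u` being the right child of `w`), `A` is the left subtree of `w` and `w` is its
label, `[u-v]` is the left chain going from `u` down (along left-child pointers) to
`v` inside `U`, `lv` is the former left subtree of `v`, and `V` is the tree replacing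
the subtree `node A w U` rooted at `w`: the vertex `u` takes the place of `w`, `w`
becomes the left child of `v`, and the former left subtree `lv` of `v` (if any)
becomes the right subtree of `w`.  The chain `[u-v]` is maximal iff `lv = nil`. -/
inductive SpliceL (A : BT α) (w : α) : BT α → BT α → BT α → Prop
  | base (lv rv : BT α) (v : α) :
      SpliceL A w (node lv v rv) (node (node A w lv) v rv) lv
  | step {lu lu' lv : BT α} (c : α) (ru : BT α) :
      SpliceL A w lu lu' lv → SpliceL A w (node lu c ru) (node lu' c ru) lv

/-- `SpliceR A w U V rv`: mirror image of `SpliceL`, i.e. the local effect of the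
direct chain rotation `rot([u-v], w)` for a **right** chain `[u-v]`: `U` is the
subtree rooted at `u` (`u` being the left child of `w`), `A` is the right subtree of
`w`, `[u-v]` is the right chain from `u` down to `v` inside `U`, `rv` is the former
right subtree of `v`, and `V` replaces the subtree `node U w A` rooted at `w`: `u`
takes the place of `w`, `w` becomes the right child of `v`, and the former right
subtree `rv` of `v` (if any) becomes the left subtree of `w`.
The chain `[u-v]` is maximal iff `rv = nil`. -/
inductive SpliceR (A : BT α) (w : α) : BT α → BT α → BT α → Prop
  | base (lv rv : BT α) (v : α) :
      SpliceR A w (node lv v rv) (node lv v (node rv w A)) rv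
  | step {ru ru' rv : BT α} (lu : BT α) (c : α) :
      SpliceR A w ru ru' rv → SpliceR A w (node lu c ru) (node lu c ru') rv

/-- `Ctx Y Y' W W'`: the tree `Y'` is obtained from `Y` by replacing one occurrence
of the subtree `W`, rooted at some vertex of `Y` (or `Y` itself), by the tree `W'`. -/
inductive Ctx : BT α → BT α → BT α → BT α → Prop
  | refl (W W' : BT α) : Ctx W W' W W'
  | left {l l' W W' : BT α} (x : α) (r : BT α) :
      Ctx l l' W W' → Ctx (node l x r) (node l' x r) W W'
  | right {r r' W W' : BT α} (l : BT α) (x : α) :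
      Ctx r r' W W' → Ctx (node l x r) (node l x r') W W'

/-- `Y'` is obtained from `Y` by one **direct** chain rotation `rot([u-v], w)`,
performed either on a left chain or (symmetrically) on a right chain, at an arbitrary
vertex `w` of `Y`. -/
def DirectRot (Y Y' : BT α) : Prop :=
  (∃ A w U V lv, SpliceL A w U V lv ∧ Ctx Y Y' (node A w U) V) ∨
  (∃ A w U V rv, SpliceR A w U V rv ∧ Ctx Y Y' (node U w A) V)

/-- `IChainL A w B X X'` captures the data of the inverse chain rotation
`rot(w, [u-v])` for a **left** chain `[u-v]`: `X` is the subtree rooted at `u`,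
`[u-v]` is the left chain from `u` down to `v` inside `X`, and the vertex `w` (with
label `w`, left subtree `A` and right subtree `B`) is the left child of `v`; `X'` is
`X` with the left child `w` of `v` replaced by `B` (the former right subtree of `w`
becomes the left subtree of `v`).  The rotation replaces the subtree `X` by
`node A w X'`: `w` takes the place of `u` and `u` becomes the right child of `w`. -/
inductive IChainL (A : BT α) (w : α) (B : BT α) : BT α → BT α → Prop
  | base (v : α) (rv : BT α) :
      IChainL A w B (node (node A w B) v rv) (node B v rv)
  | step {lu lu' : BT α} (c : α) (ru : BT α) :
      IChainL A w B lu lu' → IChainL A w B (node lu c ru) (node lu' c ru)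

/-- `IChainR B w A X X'`: mirror image of `IChainL`, for the inverse chain rotation
`rot(w, [u-v])` on a **right** chain `[u-v]`: `X` is the subtree rooted at `u`, the
vertex `w` (with left subtree `B` and right subtree `A`) is the right child of `v`;
`X'` is `X` with the right child `w` of `v` replaced by `B`.  The rotation replaces
`X` by `node X' w A`: `w` takes the place of `u` and `u` becomes the left child
of `w`. -/
inductive IChainR (B : BT α) (w : α) (A : BT α) : BT α → BT α → Prop
  | base (v : α) (lv : BT α) :
      IChainR B w A (node lv v (node B w A)) (node lv v B)
  | step {ru ru' : BT α} (lu : BT α) (c : α) :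
      IChainR B w A ru ru' → IChainR B w A (node lu c ru) (node lu c ru')

/-- `Y'` is obtained from `Y` by one **inverse** chain rotation `rot(w, [u-v])`,
performed either on a left chain or (symmetrically) on a right chain, anywhere
in `Y`. -/
def InvRot (Y Y' : BT α) : Prop :=
  (∃ A w B X X', IChainL A w B X X' ∧ Ctx Y Y' X (node A w X')) ∨
  (∃ B w A X X', IChainR B w A X X' ∧ Ctx Y Y' X (node X' w A))

/-- One chain rotation (c-rotation), direct or inverse. -/
def CStep (Y Y' : BT α) : Prop := DirectRot Y Y' ∨ InvRot Y Y'

/-- `ReachIn k S T`: `S` can be transformed into `T` by a sequence of exactly `k`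
chain rotations (each direct or inverse). -/
def ReachIn : ℕ → BT α → BT α → Prop
  | 0 => fun S T => S = T
  | k + 1 => fun S T => ∃ Y, CStep S Y ∧ ReachIn k Y T

/-- `DReachIn k S T`: `S` can be transformed into `T` by a sequence of exactly `k`
**direct** chain rotations. -/
def DReachIn : ℕ → BT α → BT α → Prop
  | 0 => fun S T => S = T
  | k + 1 => fun S T => ∃ Y, DirectRot S Y ∧ DReachIn k Y T

/-- The chain distance `C(S,T)`: the minimum number of chain rotations (direct or
inverse) needed to transform `S` into `T`. -/
noncomputable def chainDist (S T : BT α) : ℕ := sInf {k | ReachIn k S T}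

end BT

open BT

namespace BT

open scoped Classical

variable {α : Type}

/-- Helper: `R1 t = R t` if `t` is a node, and `1` if `t = nil`. -/
def R1 : BT α → ℕ
  | nil => 1
  | node l x r => R (node l x r)

lemma R_node (l : BT α) (x : α) (r : BT α) : R (node l x r) = R l + R1 r := by
  cases r <;> simp [R, R1]

lemma R1_ne {t : BT α} (h : t ≠ nil) : R1 t = R t := by
  cases t with
  | nil => exact absurd rfl h
  | node l x r => rfl

lemma spliceL_ne {A : BT α} {w : α} {U V lv : BT α} (h : SpliceL A w U V lv) :
    U ≠ nil ∧ V ≠ nil := by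
  cases h <;> exact ⟨by simp, by simp⟩

lemma spliceR_ne {A : BT α} {w : α} {U V rv : BT α} (h : SpliceR A w U V rv) :
    U ≠ nil ∧ V ≠ nil := by
  cases h <;> exact ⟨by simp, by simp⟩

lemma ichainL_ne {A : BT α} {w : α} {B X X' : BT α} (h : IChainL A w B X X') :
    X ≠ nil ∧ X' ≠ nil := by
  cases h <;> exact ⟨by simp, by simp⟩

lemma ichainR_ne {B : BT α} {w : α} {A X X' : BT α} (h : IChainR B w A X X') :
    X ≠ nil ∧ X' ≠ nil := by
  cases h <;> exact ⟨by simp, by simp⟩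

lemma spliceL_R {A : BT α} {w : α} {U V lv : BT α} (h : SpliceL A w U V lv) :
    (R V : ℤ) = R (node A w U) + (if lv = nil then 1 else 0) := by
  induction h with
  | base lv rv v =>
      cases lv <;> cases rv <;> simp [R] <;> push_cast <;> ring
  | step c ru h ih =>
      rename_i lu lu' lv
      have h1 := R1_ne (spliceL_ne h).1
      rw [R_node lu' c ru, R_node A w (node lu c ru),
        R1_ne (by simp : (node lu c ru : BT α) ≠ nil), R_node lu c ru]
      rw [R_node A w lu, h1] at ih
      push_cast at ih ⊢
      linarith

lemma spliceR_R {A : BT α} {w : α} {U V rv : BT α} (h : SpliceR A w U V rv) :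
    (R V : ℤ) = R (node U w A) - (if rv = nil then 1 else 0) := by
  induction h with
  | base lv rv v =>
      cases rv <;> cases A <;> simp [R] <;> push_cast <;> ring
  | step lu c h ih =>
      rename_i ru ru' rv
      have h1 := R1_ne (spliceR_ne h).1
      have h2 := R1_ne (spliceR_ne h).2
      rw [R_node lu c ru', h2, R_node (node lu c ru) w A, R_node lu c ru, h1]
      rw [R_node ru w A] at ih
      push_cast at ih ⊢
      linarith

lemma ichainL_R {A : BT α} {w : α} {B X X' : BT α} (h : IChainL A w B X X') :
    (R (node A w X') : ℤ) = R X - (if B = nil then 1 else 0) := by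
  induction h with
  | base v rv =>
      cases B <;> cases rv <;> simp [R] <;> push_cast <;> ring
  | step c ru h ih =>
      rename_i lu lu'
      have h1 := R1_ne (ichainL_ne h).1
      have h2 := R1_ne (ichainL_ne h).2
      rw [R_node A w (node lu' c ru), R1_ne (by simp : (node lu' c ru : BT α) ≠ nil),
        R_node lu' c ru, R_node lu c ru]
      rw [R_node A w lu', h2] at ih
      push_cast at ih ⊢
      linarith

lemma ichainR_R {B : BT α} {w : α} {A X X' : BT α} (h : IChainR B w A X X') :
    (R (node X' w A) : ℤ) = R X + (if B = nil then 1 else 0) := by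
  induction h with
  | base v lv =>
      cases B <;> cases A <;> simp [R] <;> push_cast <;> ring
  | step lu c h ih =>
      rename_i ru ru'
      have h1 := R1_ne (ichainR_ne h).1
      have h2 := R1_ne (ichainR_ne h).2
      rw [R_node (node lu c ru') w A, R_node lu c ru', h2, R_node lu c ru, h1]
      rw [R_node ru' w A] at ih
      push_cast at ih ⊢
      linarith

lemma ctx_ne {Y Y' W W' : BT α} (h : Ctx Y Y' W W') :
    (W ≠ nil → Y ≠ nil) ∧ (W' ≠ nil → Y' ≠ nil) := by
  induction h with
  | refl W W' => exact ⟨id, id⟩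
  | left x r h ih => exact ⟨fun _ => by simp, fun _ => by simp⟩
  | right l x h ih => exact ⟨fun _ => by simp, fun _ => by simp⟩

lemma ctx_R {Y Y' W W' : BT α} (h : Ctx Y Y' W W') (hW : W ≠ nil) (hW' : W' ≠ nil) :
    (R Y' : ℤ) - R Y = (R W' : ℤ) - R W := by
  induction h with
  | refl W W' => rfl
  | left x r h ih =>
      rename_i l l' _ _
      rw [R_node l x r, R_node l' x r]
      push_cast
      linarith [ih hW hW']
  | right l x h ih =>
      rename_i r r' _ _
      rw [R_node l x r, R_node l x r', R1_ne ((ctx_ne h).1 hW),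
        R1_ne ((ctx_ne h).2 hW')]
      push_cast
      linarith [ih hW hW']

lemma cstep_R {Y Y' : BT α} (h : CStep Y Y') : |(R Y' : ℤ) - R Y| ≤ 1 := by
  rcases h with (⟨A, w, U, V, lv, hs, hc⟩ | ⟨A, w, U, V, rv, hs, hc⟩) |
    (⟨A, w, B, X, X', hs, hc⟩ | ⟨B, w, A, X, X', hs, hc⟩)
  · rw [ctx_R hc (by simp) (spliceL_ne hs).2, spliceL_R hs]
    split <;> norm_num
  · rw [ctx_R hc (by simp) (spliceR_ne hs).2, spliceR_R hs]
    split <;> norm_num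
  · rw [ctx_R hc (ichainL_ne hs).1 (by simp)]
    have := ichainL_R hs
    rw [this]
    split <;> norm_num
  · rw [ctx_R hc (ichainR_ne hs).1 (by simp)]
    have := ichainR_R hs
    rw [this]
    split <;> norm_num

lemma reachIn_R {k : ℕ} : ∀ {S T : BT α}, ReachIn k S T → |(R S : ℤ) - R T| ≤ k := by
  induction k with
  | zero => intro S T h; cases h; simp
  | succ k ih =>
      intro S T h
      obtain ⟨Y, hstep, hrest⟩ := h
      have h1 := cstep_R hstep
      have h2 := ih hrest
      have := abs_sub_le ((R S : ℤ)) (R Y) (R T)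
      rw [abs_sub_comm (R S : ℤ) (R Y)] at this
      push_cast
      linarith

/- ### Connectivity -/

lemma dreach_trans : ∀ {j k : ℕ} {S Y T : BT α},
    DReachIn j S Y → DReachIn k Y T → DReachIn (j + k) S T := by
  intro j
  induction j with
  | zero => intro k S Y T h1 h2; cases h1; simpa using h2
  | succ j ih =>
      intro k S Y T h1 h2
      obtain ⟨Z, hd, hrest⟩ := h1
      have e : j + 1 + k = (j + k) + 1 := by omega
      rw [e]
      exact ⟨Z, hd, ih hrest h2⟩

lemma directRot_lift_right {l : BT α} {x : α} {r r' : BT α} (h : DirectRot r r') :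
    DirectRot (node l x r) (node l x r') := by
  rcases h with ⟨A, w, U, V, lv, hs, hc⟩ | ⟨A, w, U, V, rv, hs, hc⟩
  · exact Or.inl ⟨A, w, U, V, lv, hs, Ctx.right l x hc⟩
  · exact Or.inr ⟨A, w, U, V, rv, hs, Ctx.right l x hc⟩

lemma dreach_lift_right {k : ℕ} : ∀ {l : BT α} {x : α} {r r' : BT α},
    DReachIn k r r' → DReachIn k (node l x r) (node l x r') := by
  induction k with
  | zero => intro l x r r' h; cases h; rfl
  | succ k ih =>
      intro l x r r' h
      obtain ⟨Z, hd, hrest⟩ := h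
      exact ⟨node l x Z, directRot_lift_right hd, ih hrest⟩

lemma rotate_left_away : ∀ (l r : BT Unit),
    ∃ k r', DReachIn k (node l () r) (node nil () r') ∧ r'.size = l.size + r.size := by
  intro l
  induction l with
  | nil => intro r; exact ⟨0, r, rfl, by simp [size]⟩
  | node ll y lr ihl ihr =>
      intro r
      obtain ⟨k, r', h, hsz⟩ := ihl (node lr () r)
      refine ⟨k + 1, r', ⟨node ll () (node lr () r), ?_, h⟩, ?_⟩
      · exact Or.inr ⟨r, (), node ll () lr, node ll () (node lr () r), lr,
          SpliceR.base ll lr (), Ctx.refl _ _⟩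
      · simp [size] at hsz ⊢; omega

lemma to_rightChain : ∀ (n : ℕ) (t : BT Unit), t.size = n →
    ∃ k, DReachIn k t (rightChain n) := by
  intro n
  induction n using Nat.strong_induction_on with
  | _ n ih =>
      intro t ht
      cases t with
      | nil =>
          simp [size] at ht
          subst ht
          exact ⟨0, rfl⟩
      | node l x r =>
          cases x
          obtain ⟨k1, r', h1, hsz⟩ := rotate_left_away l r
          have hn : n = r'.size + 1 := by simp [size] at ht; omega
          obtain ⟨k2, h2⟩ := ih r'.size (by omega) r' rfl
          refine ⟨k1 + k2, dreach_trans h1 ?_⟩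
          have := dreach_lift_right (l := nil) (x := ()) h2
          rw [hn]
          simpa [rightChain] using this

/- ### Reversal of direct rotations -/

lemma ctx_symm {Y Y' W W' : BT α} (h : Ctx Y Y' W W') : Ctx Y' Y W' W := by
  induction h with
  | refl W W' => exact Ctx.refl _ _
  | left x r _ ih => exact Ctx.left x r ih
  | right l x _ ih => exact Ctx.right l x ih

lemma spliceL_ichainL {A : BT α} {w : α} {U V lv : BT α} (h : SpliceL A w U V lv) :
    IChainL A w lv V U := by
  induction h with
  | base lv rv v => exact IChainL.base v rv
  | step c ru _ ih => exact IChainL.step c ru ih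

lemma spliceR_ichainR {A : BT α} {w : α} {U V rv : BT α} (h : SpliceR A w U V rv) :
    IChainR rv w A V U := by
  induction h with
  | base lv rv v => exact IChainR.base v lv
  | step lu c _ ih => exact IChainR.step lu c ih

lemma directRot_invRot {Y Y' : BT α} (h : DirectRot Y Y') : InvRot Y' Y := by
  rcases h with ⟨A, w, U, V, lv, hs, hc⟩ | ⟨A, w, U, V, rv, hs, hc⟩
  · exact Or.inl ⟨A, w, lv, V, U, spliceL_ichainL hs, ctx_symm hc⟩
  · exact Or.inr ⟨rv, w, A, V, U, spliceR_ichainR hs, ctx_symm hc⟩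

lemma reach_append {k : ℕ} : ∀ {S Y T : BT α},
    ReachIn k S Y → CStep Y T → ReachIn (k + 1) S T := by
  induction k with
  | zero => intro S Y T h hstep; cases h; exact ⟨T, hstep, rfl⟩
  | succ k ih =>
      intro S Y T h hstep
      obtain ⟨Z, hz, hrest⟩ := h
      exact ⟨Z, hz, ih hrest hstep⟩

lemma dreach_rev {k : ℕ} : ∀ {T C : BT α}, DReachIn k T C → ReachIn k C T := by
  induction k with
  | zero => intro T C h; cases h; rfl
  | succ k ih =>
      intro T C h
      obtain ⟨Y, hd, hrest⟩ := h
      exact reach_append (ih hrest) (Or.inr (directRot_invRot hd))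

lemma dreach_reach {k : ℕ} : ∀ {S T : BT α}, DReachIn k S T → ReachIn k S T := by
  induction k with
  | zero => intro S T h; exact h
  | succ k ih =>
      intro S T h
      obtain ⟨Y, hd, hrest⟩ := h
      exact ⟨Y, Or.inl hd, ih hrest⟩

lemma reach_trans : ∀ {j k : ℕ} {S Y T : BT α},
    ReachIn j S Y → ReachIn k Y T → ReachIn (j + k) S T := by
  intro j
  induction j with
  | zero => intro k S Y T h1 h2; cases h1; simpa using h2
  | succ j ih =>
      intro k S Y T h1 h2
      obtain ⟨Z, hz, hrest⟩ := h1
      have e : j + 1 + k = (j + k) + 1 := by omega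
      rw [e]
      exact ⟨Z, hz, ih hrest h2⟩

end BT


/-- for any two rooted binary trees `S` and `T` with the same number `n`
of vertices, `C(S,T) ≥ |R_S − R_T|`. -/
theorem chainDist_ge_R_diff (S T : BT Unit) (n : ℕ) (hS : S.size = n) (hT : T.size = n) :
    |(S.R : ℤ) - (T.R : ℤ)| ≤ (chainDist S T : ℤ) := by
  have hS' : ∃ k1, DReachIn k1 S (rightChain n) := to_rightChain n S hS
  have hT' : ∃ k2, DReachIn k2 T (rightChain n) := to_rightChain n T hT
  obtain ⟨k1, h1⟩ := hS'
  obtain ⟨k2, h2⟩ := hT'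
  have hne : {k | ReachIn k S T}.Nonempty :=
    ⟨k1 + k2, reach_trans (dreach_reach h1) (dreach_rev h2)⟩
  have hmem : ReachIn (chainDist S T) S T := Nat.sInf_mem hne
  exact reachIn_R hmem
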